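/- Every pd-example X (i.e., a space with pd(X) < d(X)) has a nonempty open subspace Y which is neat and is also a pd-example. -/
import Mathlib


open Cardinal Set Topology

universe u v

/-- A neighborhood assignment on a topological space. -/
def NbhdAssign {X : Type u} [TopologicalSpace X] (U : X → Set X) : Prop :=
  ∀ x, IsOpen (U x) ∧ x ∈ U x

/-- The pinning down number of a family of sets: the least cardinality of a set
meeting every nonempty member of the family. -/
noncomputable def pdFam {α : Type u} (𝒜 : Set (Set α)) : Cardinal.{u} :=
  sInf {c | ∃ A : Set α, #A = c ∧ ∀ S ∈ 𝒜, S.Nonempty → (A ∩ S).Nonempty}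

/-- The pinning down number of a neighborhood assignment. -/
noncomputable def pdAssign {X : Type u} [TopologicalSpace X] (U : X → Set X) : Cardinal.{u} :=
  sInf {c | ∃ A : Set X, #A = c ∧ ∀ x, (A ∩ U x).Nonempty}

/-- The pinning down number of a topological space. -/
noncomputable def pdSpace (X : Type u) [TopologicalSpace X] : Cardinal.{u} :=
  ⨆ U : {U : X → Set X // NbhdAssign U}, pdAssign U.1

/-- The density of a topological space. -/
noncomputable def density (X : Type u) [TopologicalSpace X] : Cardinal.{u} :=
  sInf {c | ∃ D : Set X, #D = c ∧ Dense D}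

/-- The cellularity of a topological space. -/
noncomputable def cellularity (X : Type u) [TopologicalSpace X] : Cardinal.{u} :=
  ⨆ 𝒞 : {C : Set (Set X) // (∀ U ∈ C, IsOpen U ∧ U.Nonempty) ∧ C.PairwiseDisjoint id}, #𝒞.1

/-- `Δ(X)`: the least cardinality of a nonempty open subset of `X`. -/
noncomputable def Delta (X : Type u) [TopologicalSpace X] : Cardinal.{u} :=
  sInf {c | ∃ G : Set X, IsOpen G ∧ G.Nonempty ∧ #G = c}

/-- A space is neat if `Δ(X) = |X|`. -/
def Neat (X : Type u) [TopologicalSpace X] : Prop := Delta X = #X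

section Aux

variable {X : Type u} [TopologicalSpace X]

lemma pdAssignSet_nonempty {U : X → Set X} (hU : NbhdAssign U) :
    {c | ∃ A : Set X, #A = c ∧ ∀ x, (A ∩ U x).Nonempty}.Nonempty :=
  ⟨#(univ : Set X), univ, rfl, fun x => ⟨x, mem_univ x, (hU x).2⟩⟩

lemma pdAssign_le {U : X → Set X} {A : Set X}
    (hA : ∀ x, (A ∩ U x).Nonempty) : pdAssign U ≤ #A :=
  csInf_le (OrderBot.bddBelow _) ⟨A, rfl, hA⟩

lemma le_pdAssign {U : X → Set X} (hU : NbhdAssign U) {c : Cardinal.{u}}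
    (h : ∀ A : Set X, (∀ x, (A ∩ U x).Nonempty) → c ≤ #A) : c ≤ pdAssign U :=
  le_csInf (pdAssignSet_nonempty hU) (by rintro d ⟨A, rfl, hA⟩; exact h A hA)

lemma pdAssign_le_pdSpace {U : X → Set X} (hU : NbhdAssign U) :
    pdAssign U ≤ pdSpace X :=
  le_ciSup (f := fun V : {U : X → Set X // NbhdAssign U} => pdAssign V.1)
    (Cardinal.bddAbove_range _) ⟨U, hU⟩

/-- Any pairwise disjoint family of nonempty open sets has cardinality at most `pdSpace X`. -/
lemma mk_le_pdSpace_of_disjoint {𝒞 : Set (Set X)}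
    (hop : ∀ G ∈ 𝒞, IsOpen G ∧ G.Nonempty) (hdis : 𝒞.PairwiseDisjoint id) :
    #𝒞 ≤ pdSpace X := by
  classical
  set U : X → Set X := fun x => if h : ∃ G ∈ 𝒞, x ∈ G then h.choose else univ with hUdef
  have hU : NbhdAssign U := by
    intro x
    by_cases h : ∃ G ∈ 𝒞, x ∈ G
    · have hc := h.choose_spec
      simp only [hUdef, dif_pos h]
      exact ⟨(hop _ hc.1).1, hc.2⟩
    · simp only [hUdef, dif_neg h]
      exact ⟨isOpen_univ, mem_univ x⟩
  refine le_trans (le_pdAssign hU fun A hA => ?_) (pdAssign_le_pdSpace hU)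
  have key : ∀ G ∈ 𝒞, (A ∩ G).Nonempty := by
    intro G hG
    obtain ⟨p, hp⟩ := (hop G hG).2
    have h : ∃ G' ∈ 𝒞, p ∈ G' := ⟨G, hG, hp⟩
    have hc := h.choose_spec
    have hUp : U p = h.choose := by simp only [hUdef, dif_pos h]
    have hGeq : h.choose = G := by
      by_contra hne
      exact Set.disjoint_left.mp (hdis hc.1 hG hne) hc.2 hp
    have := hA p
    rwa [hUp, hGeq] at this
  choose pt hpt using fun G : ↥𝒞 => key G.1 G.2
  have hginj : Function.Injective (fun G : ↥𝒞 => (⟨pt G, (hpt G).1⟩ : ↥A)) := by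
    intro G₁ G₂ hEq
    have hvv : pt G₁ = pt G₂ := congrArg Subtype.val hEq
    by_contra hne
    have hne' : G₁.1 ≠ G₂.1 := fun h => hne (Subtype.ext h)
    exact Set.disjoint_left.mp (hdis G₁.2 G₂.2 hne') (hpt G₁).2 (hvv ▸ (hpt G₂).2)
  exact Cardinal.mk_le_of_injective hginj

/-- The pinning down number of an open subspace is at most that of the whole space. -/
lemma pdSpace_subtype_le {Y : Set X} (hY : IsOpen Y) : pdSpace Y ≤ pdSpace X := by
  classical
  have hne : Nonempty {V : Y → Set Y // NbhdAssign V} :=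
    ⟨⟨fun _ => univ, fun y => ⟨isOpen_univ, mem_univ y⟩⟩⟩
  refine ciSup_le fun V => ?_
  set U : X → Set X :=
    fun x => if h : x ∈ Y then Subtype.val '' (V.1 ⟨x, h⟩) else univ with hUdef
  have hU : NbhdAssign U := by
    intro x
    by_cases h : x ∈ Y
    · simp only [hUdef, dif_pos h]
      exact ⟨hY.isOpenMap_subtype_val _ (V.2 ⟨x, h⟩).1, ⟨⟨x, h⟩, (V.2 ⟨x, h⟩).2, rfl⟩⟩
    · simp only [hUdef, dif_neg h]
      exact ⟨isOpen_univ, mem_univ x⟩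
  refine le_trans (le_pdAssign hU fun A hA => ?_) (pdAssign_le_pdSpace hU)
  have hpin : ∀ y : Y, ((Subtype.val ⁻¹' A : Set Y) ∩ V.1 y).Nonempty := by
    intro y
    have h1 := hA y.1
    have hUy : U y.1 = Subtype.val '' (V.1 y) := by
      simp only [hUdef, dif_pos y.2, Subtype.coe_eta]
    rw [hUy] at h1
    obtain ⟨a, haA, v, hv, rfl⟩ := h1
    exact ⟨v, haA, hv⟩
  calc pdAssign V.1 ≤ #(Subtype.val ⁻¹' A : Set Y) := pdAssign_le hpin
    _ ≤ #A := Cardinal.mk_preimage_of_injective _ _ Subtype.coe_injective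

lemma density_le_mk_of_dense {D : Set X} (hD : Dense D) : density X ≤ #D :=
  csInf_le (OrderBot.bddBelow _) ⟨D, rfl, hD⟩

lemma exists_dense_card : ∃ D : Set X, Dense D ∧ #D = density X := by
  have h : {c | ∃ D : Set X, #D = c ∧ Dense D}.Nonempty :=
    ⟨#(univ : Set X), univ, rfl, dense_univ⟩
  obtain ⟨D, hc, hD⟩ := csInf_mem h
  exact ⟨D, hD, hc⟩

/-- A pd-example has infinite density. -/
lemma aleph0_le_density (h : pdSpace X < density X) : ℵ₀ ≤ density X := by
  by_contra hlt
  push_neg at hlt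
  obtain ⟨D, hD, hcard⟩ := exists_dense_card (X := X)
  have hDlt : #D < ℵ₀ := by rw [hcard]; exact hlt
  have hV : ∀ d ∈ D, ∃ V : Set X, IsOpen V ∧ d ∈ V ∧ V ∩ D ⊆ {d} := by
    intro d hd
    have hnd : ¬ Dense (D \ {d}) := by
      intro hdense
      have h1 : density X ≤ #(D \ {d} : Set X) := density_le_mk_of_dense hdense
      have h2 : #(D \ {d} : Set X) < #D := by
        have hsub : ({d} : Set X) ⊆ D := singleton_subset_iff.mpr hd
        have heq := Cardinal.mk_diff_add_mk hsub
        rw [Cardinal.mk_singleton] at heq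
        obtain ⟨n, hn⟩ := Cardinal.lt_aleph0.mp
          (lt_of_le_of_lt (Cardinal.mk_le_mk_of_subset diff_subset) hDlt)
        rw [← heq, hn]
        exact_mod_cast Nat.lt_succ_self n
      rw [hcard] at h2
      exact absurd h1 (not_le.mpr h2)
    have hx : ∃ x, x ∉ closure (D \ {d}) := by
      by_contra hall
      push_neg at hall
      exact hnd fun x => hall x
    set V : Set X := (closure (D \ {d}))ᶜ with hVdef
    have hVo : IsOpen V := isClosed_closure.isOpen_compl
    have hVne : V.Nonempty := hx
    have hVD : V ∩ D ⊆ {d} := by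
      rintro y ⟨hyV, hyD⟩
      by_contra hyd
      exact hyV (subset_closure ⟨hyD, hyd⟩)
    have hdV : d ∈ V := by
      obtain ⟨y, hy⟩ := hD.inter_open_nonempty V hVo hVne
      have : y = d := hVD ⟨hy.1, hy.2⟩
      exact this ▸ hy.1
    exact ⟨V, hVo, hdV, hVD⟩
  choose! V hVo hVmem hVD using hV
  have hVinj : ∀ d ∈ D, ∀ e ∈ D, V d = V e → d = e := by
    intro d hd e he hVde
    have : d ∈ V e ∩ D := ⟨hVde ▸ hVmem d hd, hd⟩
    exact hVD e he this
  set ℛ : Set (Set X) := (fun d : ↥D => V d.1) '' univ with hℛ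
  have hℛop : ∀ G ∈ ℛ, IsOpen G ∧ G.Nonempty := by
    rintro G ⟨d, -, rfl⟩
    exact ⟨hVo d.1 d.2, ⟨d.1, hVmem d.1 d.2⟩⟩
  have hℛdis : ℛ.PairwiseDisjoint id := by
    rintro G₁ ⟨d, -, rfl⟩ G₂ ⟨e, -, rfl⟩ hne
    rw [Function.onFun, id, id, Set.disjoint_left]
    intro x hx1 hx2
    have hOpen : IsOpen (V d.1 ∩ V e.1) := (hVo d.1 d.2).inter (hVo e.1 e.2)
    obtain ⟨y, hy⟩ := hD.inter_open_nonempty _ hOpen ⟨x, hx1, hx2⟩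
    have hyd : y = d.1 := hVD d.1 d.2 ⟨hy.1.1, hy.2⟩
    have hye : y = e.1 := hVD e.1 e.2 ⟨hy.1.2, hy.2⟩
    exact hne (show V d.1 = V e.1 from by rw [← hyd, hye])
  have hcardℛ : #D ≤ #ℛ := by
    have : Function.Injective (fun d : ↥D => (⟨V d.1, ⟨d, mem_univ d, rfl⟩⟩ : ↥ℛ)) := by
      intro d e hEq
      have : V d.1 = V e.1 := congrArg Subtype.val hEq
      exact Subtype.ext (hVinj d.1 d.2 e.1 e.2 this)
    exact Cardinal.mk_le_of_injective this
  have : density X ≤ pdSpace X := by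
    calc density X = #D := hcard.symm
      _ ≤ #ℛ := hcardℛ
      _ ≤ pdSpace X := mk_le_pdSpace_of_disjoint hℛop hℛdis
  exact absurd h (not_lt.mpr this)

/-- From a small-density subspace, extract a small set whose closure covers it. -/
lemma exists_small_closure {G : Set X} {κ : Cardinal.{u}} (h : density G ≤ κ) :
    ∃ E : Set X, E ⊆ G ∧ #E ≤ κ ∧ G ⊆ closure E := by
  obtain ⟨E₀, hE₀d, hE₀c⟩ := exists_dense_card (X := G)
  refine ⟨Subtype.val '' E₀, by rintro _ ⟨v, -, rfl⟩; exact v.2, ?_, ?_⟩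
  · calc #(Subtype.val '' E₀) ≤ #E₀ := Cardinal.mk_image_le
      _ = density ↥G := hE₀c
      _ ≤ κ := h
  · intro x hx
    rw [mem_closure_iff]
    intro O hO hxO
    have hne : ((Subtype.val ⁻¹' O : Set G) ∩ E₀).Nonempty :=
      hE₀d.inter_open_nonempty _ (hO.preimage continuous_subtype_val) ⟨⟨x, hx⟩, hxO⟩
    obtain ⟨v, hvO, hvE₀⟩ := hne
    exact ⟨v, hvO, v, hvE₀, rfl⟩

end Aux

/-- every pd-example has a nonempty open subspace that is a neat pd-example. -/
theorem exists_neat_open_pd_example (X : Type u) [TopologicalSpace X]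
    (hpd : pdSpace X < density X) :
    ∃ Y : Set X, IsOpen Y ∧ Y.Nonempty ∧ Neat Y ∧ pdSpace Y < density Y := by
  classical
  set κ := pdSpace X with hκ
  have hdinf : ℵ₀ ≤ density X := aleph0_le_density hpd
  -- a maximal pairwise disjoint family of nonempty open sets of small density
  set S : Set (Set (Set X)) :=
    {𝒞 | (∀ G ∈ 𝒞, IsOpen G ∧ G.Nonempty ∧ density ↥G ≤ κ) ∧ 𝒞.PairwiseDisjoint id} with hS
  obtain ⟨𝒟, h𝒟max⟩ := zorn_subset S (by
    intro c hcS hchain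
    refine ⟨⋃₀ c, ⟨?_, ?_⟩, fun s hs => subset_sUnion_of_mem hs⟩
    · rintro G ⟨𝒞, h𝒞c, hG𝒞⟩
      exact (hcS h𝒞c).1 G hG𝒞
    · rintro G₁ ⟨𝒞₁, h𝒞₁, hG₁⟩ G₂ ⟨𝒞₂, h𝒞₂, hG₂⟩ hne
      rcases hchain.total h𝒞₁ h𝒞₂ with hsub | hsub
      · exact (hcS h𝒞₂).2 (hsub hG₁) hG₂ hne
      · exact (hcS h𝒞₁).2 hG₁ (hsub hG₂) hne)
  have h𝒟S : 𝒟 ∈ S := h𝒟max.1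
  have h𝒟good := h𝒟S.1
  have h𝒟dis := h𝒟S.2
  set Z : Set X := ⋃₀ 𝒟 with hZ
  set Y₀ : Set X := (closure Z)ᶜ with hY₀
  have hY₀open : IsOpen Y₀ := isClosed_closure.isOpen_compl
  have hY₀ne : Y₀.Nonempty := by
    by_contra hempty
    rw [not_nonempty_iff_eq_empty, hY₀, compl_empty_iff] at hempty
    have hZdense : Dense Z := dense_iff_closure_eq.mpr hempty
    have hch : ∀ D : ↥𝒟, ∃ E : Set X, E ⊆ D.1 ∧ #E ≤ κ ∧ D.1 ⊆ closure E :=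
      fun D => exists_small_closure (h𝒟good D.1 D.2).2.2
    choose E hE1 hE2 hE3 using hch
    set E' : Set X := ⋃ D : ↥𝒟, E D with hE'
    have hE'dense : Dense E' := by
      have hsub : Z ⊆ closure E' := by
        rintro z ⟨D, hD𝒟, hzD⟩
        exact closure_mono (subset_iUnion E ⟨D, hD𝒟⟩) (hE3 ⟨D, hD𝒟⟩ hzD)
      rw [dense_iff_closure_eq]
      have h1 : closure Z ⊆ closure E' := by
        have := closure_mono hsub
        rwa [closure_closure] at this
      rw [hempty] at h1
      exact eq_univ_of_univ_subset h1
    have hcard : density X ≤ κ * κ := by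
      refine le_trans (density_le_mk_of_dense hE'dense) ?_
      refine le_trans (Cardinal.mk_iUnion_le E) ?_
      have h1 : #↥𝒟 ≤ κ :=
        mk_le_pdSpace_of_disjoint (fun G hG => ⟨(h𝒟good G hG).1, (h𝒟good G hG).2.1⟩) h𝒟dis
      exact mul_le_mul' h1 (ciSup_le' fun D => hE2 D)
    have hlt : κ * κ < density X := by
      rcases lt_or_ge κ ℵ₀ with hfin | hinf
      · exact lt_of_lt_of_le (Cardinal.mul_lt_aleph0 hfin hfin) hdinf
      · rw [Cardinal.mul_eq_self hinf]; exact hpd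
    exact absurd hcard (not_le.mpr hlt)
  -- every nonempty open subset of Y₀ has density > κ
  have claimA : ∀ G : Set X, G ⊆ Y₀ → IsOpen G → G.Nonempty → κ < density ↥G := by
    intro G hGY hGo hGne
    by_contra hle
    push_neg at hle
    have hGdisj : ∀ D ∈ 𝒟, Disjoint G D := by
      intro D hD
      rw [Set.disjoint_left]
      intro x hxG hxD
      exact (hGY hxG) (subset_closure ⟨D, hD, hxD⟩)
    have hins : insert G 𝒟 ∈ S := by
      constructor
      · rintro G' (rfl | hG')
        · exact ⟨hGo, hGne, hle⟩
        · exact h𝒟good G' hG'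
      · exact h𝒟dis.insert (fun D hD _ => hGdisj D hD)
    have hGmem : G ∈ 𝒟 := h𝒟max.2 hins (subset_insert _ _) (mem_insert _ _)
    obtain ⟨x, hx⟩ := hGne
    exact Set.disjoint_left.mp (hGdisj G hGmem) hx hx
  -- pick a nonempty open subset of Y₀ of minimal cardinality
  set T : Set Cardinal.{u} := {c | ∃ G : Set X, G ⊆ Y₀ ∧ IsOpen G ∧ G.Nonempty ∧ #G = c} with hT
  have hTne : T.Nonempty := ⟨#Y₀, Y₀, subset_rfl, hY₀open, hY₀ne, rfl⟩
  obtain ⟨G₀, hG₀Y, hG₀o, hG₀ne, hG₀c⟩ := csInf_mem hTne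
  have hne' : Nonempty ↥G₀ := hG₀ne.to_subtype
  refine ⟨G₀, hG₀o, hG₀ne, ?_, lt_of_le_of_lt (pdSpace_subtype_le hG₀o)
    (claimA G₀ hG₀Y hG₀o hG₀ne)⟩
  -- neatness
  unfold Neat Delta
  apply le_antisymm
  · exact csInf_le (OrderBot.bddBelow _)
      ⟨univ, isOpen_univ, univ_nonempty, Cardinal.mk_univ⟩
  · refine le_csInf ⟨#↥G₀, univ, isOpen_univ, univ_nonempty, Cardinal.mk_univ⟩ ?_
    rintro c ⟨H, hHo, hHne, rfl⟩
    have himo : IsOpen (Subtype.val '' H) := hG₀o.isOpenMap_subtype_val _ hHo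
    have himne : (Subtype.val '' H).Nonempty := hHne.image _
    have hsub : Subtype.val '' H ⊆ Y₀ := by
      rintro _ ⟨v, -, rfl⟩
      exact hG₀Y v.2
    have hle : #G₀ ≤ #(Subtype.val '' H) := by
      rw [hG₀c]
      exact csInf_le (OrderBot.bddBelow _) ⟨Subtype.val '' H, hsub, himo, himne, rfl⟩
    rwa [Cardinal.mk_image_eq Subtype.coe_injective] at hle
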